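/- arXiv:2310.04886 — 3 statements merged into one kernel-verified Lean document; each statement's English description precedes it below -/
import Mathlib

section
/- Let ω, a ∈ ℝ³ and g ∈ ℝ be constants, let a_g = (0,0,g), let Ω = [ω]^∧, and let θ = ‖ω‖ with θ ≠ 0. Given R₀ ∈ SO(3) and v₀, p₀ ∈ ℝ³, define for t ∈ ℝ: R(t) = R₀ · exp(tΩ), v(t) = v₀ + t·a_g + R₀ · ( t·I₃ + ((1 − cos(θt))/θ²)·Ω + ((θt − sin(θt))/θ³)·Ω² ) · a, and p(t) = p₀ + t·v₀ + (t²/2)·a_g + R₀ · ( (t²/2)·I₃ + ((θt − sin(θt))/θ³)·Ω + ((θ²t²/2 − 1 + cos(θt))/θ⁴)·Ω² ) · a. Then R(0) = R₀, v(0) = v₀, p(0) = p₀, and for every t ∈ ℝ: R′(t) = R(t)·Ω, v′(t) = R(t)·a + a_g, and p′(t) = v(t). (Closed-form solution of the strapdown inertial navigation initial value problem.) -/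
/-!
Because `Ω ^ 3 = -θ ^ 2 • Ω` for `Ω = [ω]^∧`, the exponential `exp (t • Ω)` collapses to Rodrigues'
formula `1 + (sin (θ t) / θ) • Ω + ((1 - cos (θ t)) / θ ^ 2) • Ω ^ 2`: this curve starts at `1` and
solves `F' = Ω F`, which characterises `exp (t • Ω)`. The scalar coefficients appearing in `v` and
`p` are successive antiderivatives of those of Rodrigues' formula, so the matrices in `v` and `p`
are the first and second primitives of `exp (s • Ω)` vanishing at `0`; `R' = R Ω` is the
derivative of the exponential itself.
-/

open Matrix

/-- The hat map `[ω]^∧`: the skew-symmetric matrix satisfying `([ω]^∧) x = ω × x`. -/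
noncomputable def hat (ω : EuclideanSpace ℝ (Fin 3)) : Matrix (Fin 3) (Fin 3) ℝ :=
  !![0, -ω 2, ω 1; ω 2, 0, -ω 0; -ω 1, ω 0, 0]

/-- The 3×2 matrix with the two given columns. -/
noncomputable def cols (u w : Fin 3 → ℝ) : Matrix (Fin 3) (Fin 2) ℝ :=
  Matrix.of fun i j => ![u i, w i] j

open Real

section Coefficients

variable {θ : ℝ} (hθ : θ ≠ 0) (t : ℝ)
include hθ

theorem hasDerivAt_sin_mul_div :
    HasDerivAt (fun s => sin (θ * s) / θ) (cos (θ * t)) t :=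
  (((hasDerivAt_id' t).const_mul θ).sin.div_const θ).congr_deriv (by field_simp)

theorem hasDerivAt_one_sub_cos_mul_div :
    HasDerivAt (fun s => (1 - cos (θ * s)) / θ ^ 2) (sin (θ * t) / θ) t :=
  ((((hasDerivAt_id' t).const_mul θ).cos.const_sub 1).div_const (θ ^ 2)).congr_deriv
    (by field_simp)

theorem hasDerivAt_mul_sub_sin_mul_div :
    HasDerivAt (fun s => (θ * s - sin (θ * s)) / θ ^ 3) ((1 - cos (θ * t)) / θ ^ 2) t :=
  have hθs := (hasDerivAt_id' t).const_mul θ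
  ((hθs.sub hθs.sin).div_const (θ ^ 3)).congr_deriv (by field_simp)

theorem hasDerivAt_sq_mul_sq_div_two_sub_one_add_cos_mul_div :
    HasDerivAt (fun s => (θ ^ 2 * s ^ 2 / 2 - 1 + cos (θ * s)) / θ ^ 4)
      ((θ * t - sin (θ * t)) / θ ^ 3) t :=
  (((((hasDerivAt_pow 2 t).const_mul (θ ^ 2)).div_const 2).sub_const 1).add
    ((hasDerivAt_id' t).const_mul θ).cos |>.div_const (θ ^ 4)).congr_deriv
    (by field_simp; ring)

end Coefficients

section Rodrigues

variable {𝔸 : Type*} [NormedRing 𝔸] [NormedAlgebra ℝ 𝔸]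

theorem exp_smul_eq_of_hasDerivAt [CompleteSpace 𝔸] {x : 𝔸} {F : ℝ → 𝔸} (hF₀ : F 0 = 1)
    (hF : ∀ t, HasDerivAt F (x * F t) t) (t : ℝ) : NormedSpace.exp (t • x) = F t := by
  have hderiv : ∀ s, HasDerivAt (fun u => NormedSpace.exp ((t - u) • x) * F u) 0 s := fun s =>
    (((hasDerivAt_exp_smul_const x (t - s)).scomp s ((hasDerivAt_id s).const_sub t)).mul
      (hF s)).congr_deriv (by simp [mul_assoc])
  simpa [hF₀] using is_const_of_deriv_eq_zero (fun s => (hderiv s).differentiableAt)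
    (fun s => (hderiv s).deriv) 0 t

variable {θ : ℝ} (hθ : θ ≠ 0) {x : 𝔸}
include hθ

theorem exp_smul_eq_rodrigues [CompleteSpace 𝔸] (hx : x ^ 3 = -θ ^ 2 • x) (t : ℝ) :
    NormedSpace.exp (t • x)
      = 1 + (sin (θ * t) / θ) • x + ((1 - cos (θ * t)) / θ ^ 2) • x ^ 2 := by
  refine exp_smul_eq_of_hasDerivAt
    (F := fun s => 1 + (sin (θ * s) / θ) • x + ((1 - cos (θ * s)) / θ ^ 2) • x ^ 2)
    (by simp) (fun s => ?_) t
  have hcoeff : (1 - cos (θ * s)) / θ ^ 2 * -θ ^ 2 = cos (θ * s) - 1 := by field_simp; ring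
  refine ((((hasDerivAt_sin_mul_div hθ s).smul_const x).const_add 1).add
    ((hasDerivAt_one_sub_cos_mul_div hθ s).smul_const (x ^ 2))).congr_deriv ?_
  rw [mul_add, mul_add, mul_one, mul_smul_comm, mul_smul_comm, ← pow_two, ← pow_succ', hx,
    smul_smul, hcoeff]
  module

theorem hasDerivAt_rodrigues_integral [CompleteSpace 𝔸] (hx : x ^ 3 = -θ ^ 2 • x) (t : ℝ) :
    HasDerivAt (fun s => s • (1 : 𝔸) + ((1 - cos (θ * s)) / θ ^ 2) • x
      + ((θ * s - sin (θ * s)) / θ ^ 3) • x ^ 2) (NormedSpace.exp (t • x)) t := by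
  rw [exp_smul_eq_rodrigues hθ hx]
  exact ((((hasDerivAt_id' t).smul_const 1).add
    ((hasDerivAt_one_sub_cos_mul_div hθ t).smul_const x)).add
    ((hasDerivAt_mul_sub_sin_mul_div hθ t).smul_const (x ^ 2))).congr_deriv (by simp)

theorem hasDerivAt_rodrigues_double_integral (t : ℝ) :
    HasDerivAt (fun s => (s ^ 2 / 2) • (1 : 𝔸) + ((θ * s - sin (θ * s)) / θ ^ 3) • x
      + ((θ ^ 2 * s ^ 2 / 2 - 1 + cos (θ * s)) / θ ^ 4) • x ^ 2)
      (t • 1 + ((1 - cos (θ * t)) / θ ^ 2) • x + ((θ * t - sin (θ * t)) / θ ^ 3) • x ^ 2) t :=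
  ((((hasDerivAt_pow 2 t).div_const 2).smul_const 1).add
    ((hasDerivAt_mul_sub_sin_mul_div hθ t).smul_const x)).add
    ((hasDerivAt_sq_mul_sq_div_two_sub_one_add_cos_mul_div hθ t).smul_const (x ^ 2))
    |>.congr_deriv (by simp)

end Rodrigues

theorem hat_pow_three (ω : EuclideanSpace ℝ (Fin 3)) : hat ω ^ 3 = -‖ω‖ ^ 2 • hat ω := by
  have hnorm : ‖ω‖ ^ 2 = ω 0 ^ 2 + ω 1 ^ 2 + ω 2 ^ 2 := by
    simp [EuclideanSpace.norm_sq_eq, Fin.sum_univ_three]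
  ext i j
  fin_cases i <;> fin_cases j <;>
    simp [hat, pow_succ, Matrix.mul_apply, Fin.sum_univ_three, hnorm] <;> ring

section MatrixDerivatives

variable {m n : Type*} {F : ℝ → Matrix m n ℝ} {F' : Matrix m n ℝ} {t : ℝ}

theorem HasDerivAt.matrix_apply [Fintype n] (h : HasDerivAt F F' t) (i : m) (j : n) :
    HasDerivAt (fun s => F s i j) (F' i j) t :=
  hasDerivAt_pi.1 (hasDerivAt_pi.1 h i) j

theorem HasDerivAt.matrix_mulVec [Fintype n] (h : HasDerivAt F F' t) (a : n → ℝ) :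
    HasDerivAt (fun s => F s *ᵥ a) (F' *ᵥ a) t :=
  hasDerivAt_pi.2 fun i => HasDerivAt.fun_sum fun j _ => (h.matrix_apply i j).mul_const (a j)

end MatrixDerivatives

theorem stmt0_general (ω a : EuclideanSpace ℝ (Fin 3))
    (a_g : Fin 3 → ℝ)
    (Ω : Matrix (Fin 3) (Fin 3) ℝ) (hΩ : Ω = hat ω)
    (θ : ℝ) (hθ : θ = ‖ω‖) (hθ0 : θ ≠ 0)
    (R₀ : Matrix (Fin 3) (Fin 3) ℝ)
    (v₀ p₀ : Fin 3 → ℝ)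
    (R : ℝ → Matrix (Fin 3) (Fin 3) ℝ)
    (hR : ∀ t : ℝ, R t = R₀ * NormedSpace.exp (t • Ω))
    (v : ℝ → Fin 3 → ℝ)
    (hv : ∀ t : ℝ, v t = v₀ + t • a_g +
      (R₀ * (t • (1 : Matrix (Fin 3) (Fin 3) ℝ)
        + ((1 - Real.cos (θ * t)) / θ ^ 2) • Ω
        + ((θ * t - Real.sin (θ * t)) / θ ^ 3) • Ω ^ 2)).mulVec a)
    (p : ℝ → Fin 3 → ℝ)
    (hp : ∀ t : ℝ, p t = p₀ + t • v₀ + (t ^ 2 / 2) • a_g +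
      (R₀ * ((t ^ 2 / 2) • (1 : Matrix (Fin 3) (Fin 3) ℝ)
        + ((θ * t - Real.sin (θ * t)) / θ ^ 3) • Ω
        + ((θ ^ 2 * t ^ 2 / 2 - 1 + Real.cos (θ * t)) / θ ^ 4) • Ω ^ 2)).mulVec a) :
    R 0 = R₀ ∧ v 0 = v₀ ∧ p 0 = p₀ ∧
    ∀ t : ℝ,
      (∀ i j, HasDerivAt (fun s => R s i j) ((R t * Ω) i j) t) ∧
      (∀ i, HasDerivAt (fun s => v s i) (((R t).mulVec a + a_g) i) t) ∧
      (∀ i, HasDerivAt (fun s => p s i) (v t i) t) := by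
  -- `hasDerivAt_exp_smul_const` needs a Banach-algebra norm; any one induces the usual topology
  let := Matrix.linftyOpNormedRing (n := Fin 3) (α := ℝ)
  let := Matrix.linftyOpNormedAlgebra (n := Fin 3) (R := ℝ) (α := ℝ)
  have hΩ3 : Ω ^ 3 = -θ ^ 2 • Ω := by rw [hΩ, hθ, hat_pow_three]
  obtain rfl : R = _ := funext hR
  obtain rfl : v = _ := funext hv
  obtain rfl : p = _ := funext hp
  refine ⟨by simp, by simp, by simp, fun t => ⟨fun i j => HasDerivAt.matrix_apply ?_ i j,
    fun i => hasDerivAt_pi.1 ?_ i, fun i => hasDerivAt_pi.1 ?_ i⟩⟩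
  · rw [mul_assoc]
    exact (hasDerivAt_exp_smul_const Ω t).const_mul R₀
  · exact (((hasDerivAt_id' t).smul_const a_g).const_add v₀).add
      (((hasDerivAt_rodrigues_integral hθ0 hΩ3 t).const_mul R₀).matrix_mulVec a)
      |>.congr_deriv (by rw [one_smul, add_comm]; rfl)
  · exact ((((hasDerivAt_id' t).smul_const v₀).const_add p₀).add
      (((hasDerivAt_pow 2 t).div_const 2).smul_const a_g)).add
      (((hasDerivAt_rodrigues_double_integral hθ0 t).const_mul R₀).matrix_mulVec a)
      |>.congr_deriv (by simp)

/-- Closed-form solution of the strapdown inertial navigation initial value problem. -/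
theorem stmt0 (ω a : EuclideanSpace ℝ (Fin 3)) (g : ℝ)
    (a_g : Fin 3 → ℝ) (ha_g : a_g = ![0, 0, g])
    (Ω : Matrix (Fin 3) (Fin 3) ℝ) (hΩ : Ω = hat ω)
    (θ : ℝ) (hθ : θ = ‖ω‖) (hθ0 : θ ≠ 0)
    (R₀ : Matrix (Fin 3) (Fin 3) ℝ) (hR₀ : R₀ ∈ Matrix.specialOrthogonalGroup (Fin 3) ℝ)
    (v₀ p₀ : Fin 3 → ℝ)
    (R : ℝ → Matrix (Fin 3) (Fin 3) ℝ)
    (hR : ∀ t : ℝ, R t = R₀ * NormedSpace.exp (t • Ω))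
    (v : ℝ → Fin 3 → ℝ)
    (hv : ∀ t : ℝ, v t = v₀ + t • a_g +
      (R₀ * (t • (1 : Matrix (Fin 3) (Fin 3) ℝ)
        + ((1 - Real.cos (θ * t)) / θ ^ 2) • Ω
        + ((θ * t - Real.sin (θ * t)) / θ ^ 3) • Ω ^ 2)).mulVec a)
    (p : ℝ → Fin 3 → ℝ)
    (hp : ∀ t : ℝ, p t = p₀ + t • v₀ + (t ^ 2 / 2) • a_g +
      (R₀ * ((t ^ 2 / 2) • (1 : Matrix (Fin 3) (Fin 3) ℝ)
        + ((θ * t - Real.sin (θ * t)) / θ ^ 3) • Ω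
        + ((θ ^ 2 * t ^ 2 / 2 - 1 + Real.cos (θ * t)) / θ ^ 4) • Ω ^ 2)).mulVec a) :
    R 0 = R₀ ∧ v 0 = v₀ ∧ p 0 = p₀ ∧
    ∀ t : ℝ,
      (∀ i j, HasDerivAt (fun s => R s i j) ((R t * Ω) i j) t) ∧
      (∀ i, HasDerivAt (fun s => v s i) (((R t).mulVec a + a_g) i) t) ∧
      (∀ i, HasDerivAt (fun s => p s i) (v t i) t) :=
  stmt0_general ω a a_g Ω hΩ θ hθ hθ0 R₀ v₀ p₀ R hR v hv p hp
end

section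
/- Let ω, a ∈ ℝ³, g ∈ ℝ, a_g = (0,0,g), Ω = [ω]^∧, and let a = (a_x, a_y, a_z). Define the 5×5 real matrices M = [[0₃ₓ₃, A_M],[0₂ₓ₃, −B]] and N = [[Ω, A_N],[0₂ₓ₃, B]], where A_M is the 3×2 matrix with columns (a_g, 0), A_N is the 3×2 matrix with columns (a, 0), and B = [[0,1],[0,0]]. Let R : ℝ → ℝ^{3×3} and v, p : ℝ → ℝ³ be differentiable, and let X(t) be the 5×5 matrix [[R(t), v(t), p(t)],[0,1,0],[0,0,1]]. Then X′(t) = M·X(t) + X(t)·N holds at t if and only if R′(t) = R(t)·Ω, v′(t) = R(t)·a + a_g, and p′(t) = v(t). (The SINS kinematics are a mixed-invariant system on SE₂(3).) -/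
/-!
Block multiplication gives `M X + X N = [[R Ω, (R a + a_g, v)], [0, 0]]`: the `-B` of `M` cancels
the `B` of `N` in the bottom-right corner, and `(v, p) B = (0, v)` moves `v` into the column of `p`.
As `X` is constant outside its top row of blocks, comparing entrywise derivatives block by block
gives exactly the three kinematic equations.
-/

open Matrix

theorem cols_add (u w u' w' : Fin 3 → ℝ) : cols u w + cols u' w' = cols (u + u') (w + w') := by
  ext i j; fin_cases j <;> rfl

theorem mul_cols (R : Matrix (Fin 3) (Fin 3) ℝ) (u w : Fin 3 → ℝ) :
    R * cols u w = cols (R *ᵥ u) (R *ᵥ w) := by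
  ext i j; fin_cases j <;> rfl

theorem cols_mul_nilpotent (u w : Fin 3 → ℝ) :
    cols u w * (!![0, 1; 0, 0] : Matrix (Fin 2) (Fin 2) ℝ) = cols 0 u := by
  ext i j; fin_cases j <;> simp [cols, mul_apply]

theorem mixed_vector_field_eq_fromBlocks (R Ω : Matrix (Fin 3) (Fin 3) ℝ) (a a_g v p : Fin 3 → ℝ) :
    fromBlocks 0 (cols a_g 0) 0 (-!![0, 1; 0, 0]) * fromBlocks R (cols v p) 0 1 +
        fromBlocks R (cols v p) 0 1 * fromBlocks Ω (cols a 0) 0 !![0, 1; 0, 0] =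
      fromBlocks (R * Ω) (cols (R *ᵥ a + a_g) v) 0 0 := by
  rw [fromBlocks_multiply, fromBlocks_multiply, fromBlocks_add]
  simp only [mul_cols, cols_mul_nilpotent, cols_add, Matrix.zero_mul, Matrix.mul_zero,
    Matrix.mul_one, Matrix.one_mul, mulVec_zero, zero_add, add_zero, neg_add_cancel, add_comm a_g]

section Derivatives

variable {l m n o : Type*}

theorem hasDerivAt_fromBlocks_iff {A : ℝ → Matrix l n ℝ} {B : ℝ → Matrix l o ℝ}
    {C : ℝ → Matrix m n ℝ} {D : ℝ → Matrix m o ℝ} {A' : Matrix l n ℝ} {B' : Matrix l o ℝ}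
    {C' : Matrix m n ℝ} {D' : Matrix m o ℝ} {t : ℝ} :
    (∀ i j, HasDerivAt (fun s => fromBlocks (A s) (B s) (C s) (D s) i j)
        (fromBlocks A' B' C' D' i j) t) ↔
      (∀ i j, HasDerivAt (fun s => A s i j) (A' i j) t) ∧
      (∀ i j, HasDerivAt (fun s => B s i j) (B' i j) t) ∧
      (∀ i j, HasDerivAt (fun s => C s i j) (C' i j) t) ∧
      (∀ i j, HasDerivAt (fun s => D s i j) (D' i j) t) := by
  simp only [Sum.forall, fromBlocks_apply₁₁, fromBlocks_apply₁₂, fromBlocks_apply₂₁,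
    fromBlocks_apply₂₂, forall_and]
  tauto

theorem hasDerivAt_cols_iff {u w : ℝ → Fin 3 → ℝ} {u' w' : Fin 3 → ℝ} {t : ℝ} :
    (∀ i j, HasDerivAt (fun s => cols (u s) (w s) i j) (cols u' w' i j) t) ↔
      (∀ i, HasDerivAt (fun s => u s i) (u' i) t) ∧ (∀ i, HasDerivAt (fun s => w s i) (w' i) t) := by
  simp only [Fin.forall_fin_two, ← forall_and]
  rfl

theorem hasDerivAt_const_matrix (K : Matrix m n ℝ) (t : ℝ) :
    ∀ i j, HasDerivAt (fun _ : ℝ => K i j) ((0 : Matrix m n ℝ) i j) t :=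
  fun _ _ => hasDerivAt_const t _

end Derivatives

theorem stmt3_general (a : EuclideanSpace ℝ (Fin 3))
    (a_g : Fin 3 → ℝ)
    (Ω : Matrix (Fin 3) (Fin 3) ℝ)
    (A_M : Matrix (Fin 3) (Fin 2) ℝ) (hAM : A_M = cols a_g 0)
    (A_N : Matrix (Fin 3) (Fin 2) ℝ) (hAN : A_N = cols (fun i => a i) 0)
    (B : Matrix (Fin 2) (Fin 2) ℝ) (hB : B = !![0, 1; 0, 0])
    (M : Matrix (Fin 3 ⊕ Fin 2) (Fin 3 ⊕ Fin 2) ℝ) (hM : M = Matrix.fromBlocks 0 A_M 0 (-B))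
    (N : Matrix (Fin 3 ⊕ Fin 2) (Fin 3 ⊕ Fin 2) ℝ) (hN : N = Matrix.fromBlocks Ω A_N 0 B)
    (R : ℝ → Matrix (Fin 3) (Fin 3) ℝ) (v p : ℝ → Fin 3 → ℝ)
    (X : ℝ → Matrix (Fin 3 ⊕ Fin 2) (Fin 3 ⊕ Fin 2) ℝ)
    (hX : ∀ t : ℝ, X t = Matrix.fromBlocks (R t) (cols (v t) (p t)) 0 1)
    (t : ℝ) :
    (∀ i j, HasDerivAt (fun s => X s i j) ((M * X t + X t * N) i j) t) ↔
      ((∀ i j, HasDerivAt (fun s => R s i j) ((R t * Ω) i j) t) ∧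
       (∀ i, HasDerivAt (fun s => v s i) (((R t).mulVec a + a_g) i) t) ∧
       (∀ i, HasDerivAt (fun s => p s i) (v t i) t)) := by
  have hfield :
      M * X t + X t * N = fromBlocks (R t * Ω) (cols ((R t).mulVec a + a_g) (v t)) 0 0 := by
    subst hM hN hAM hAN hB
    rw [hX]
    exact mixed_vector_field_eq_fromBlocks (R t) Ω (fun i => a i) a_g (v t) (p t)
  rw [hfield]
  obtain rfl : X = _ := funext hX
  beta_reduce
  rw [hasDerivAt_fromBlocks_iff, hasDerivAt_cols_iff]
  simp only [hasDerivAt_const_matrix, forall_const, and_true]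

/-- The SINS kinematics are a mixed-invariant system on SE₂(3). -/
theorem stmt3 (ω a : EuclideanSpace ℝ (Fin 3)) (g : ℝ)
    (a_g : Fin 3 → ℝ) (ha_g : a_g = ![0, 0, g])
    (Ω : Matrix (Fin 3) (Fin 3) ℝ) (hΩ : Ω = hat ω)
    (A_M : Matrix (Fin 3) (Fin 2) ℝ) (hAM : A_M = cols a_g 0)
    (A_N : Matrix (Fin 3) (Fin 2) ℝ) (hAN : A_N = cols (fun i => a i) 0)
    (B : Matrix (Fin 2) (Fin 2) ℝ) (hB : B = !![0, 1; 0, 0])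
    (M : Matrix (Fin 3 ⊕ Fin 2) (Fin 3 ⊕ Fin 2) ℝ) (hM : M = Matrix.fromBlocks 0 A_M 0 (-B))
    (N : Matrix (Fin 3 ⊕ Fin 2) (Fin 3 ⊕ Fin 2) ℝ) (hN : N = Matrix.fromBlocks Ω A_N 0 B)
    (R : ℝ → Matrix (Fin 3) (Fin 3) ℝ) (v p : ℝ → Fin 3 → ℝ)
    (hRd : ∀ i j, Differentiable ℝ fun s => R s i j)
    (hvd : ∀ i, Differentiable ℝ fun s => v s i)
    (hpd : ∀ i, Differentiable ℝ fun s => p s i)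
    (X : ℝ → Matrix (Fin 3 ⊕ Fin 2) (Fin 3 ⊕ Fin 2) ℝ)
    (hX : ∀ t : ℝ, X t = Matrix.fromBlocks (R t) (cols (v t) (p t)) 0 1)
    (t : ℝ) :
    (∀ i j, HasDerivAt (fun s => X s i j) ((M * X t + X t * N) i j) t) ↔
      ((∀ i j, HasDerivAt (fun s => R s i j) ((R t * Ω) i j) t) ∧
       (∀ i, HasDerivAt (fun s => v s i) (((R t).mulVec a + a_g) i) t) ∧
       (∀ i, HasDerivAt (fun s => p s i) (v t i) t)) :=
  stmt3_general a a_g Ω A_M hAM A_N hAN B hB M hM N hN R v p X hX t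
end

section
/- Let Ω be a 3×3 real matrix, A a 3×2 real matrix, and B a 2×2 real matrix with B² = 0, and let l be the 5×5 block matrix [[Ω, A],[0₂ₓ₃, B]]. Then exp(l) = [[exp(Ω), 𝒩],[0₂ₓ₃, I₂ + B]], where 𝒩 = A + Σ_{n=2}^{∞} (Ω^{n−1}A + Ω^{n−2}AB)/n!. -/
/-!
Because `B ^ 2 = 0`, every power `l ^ (k + 2)` is block upper triangular with zero lower-right
block: `fromBlocks (Ω ^ (k + 2)) (Ω ^ (k + 1) * A + Ω ^ k * A * B) 0 0`. So the tail
`∑_{k ≥ 2} l ^ k / k!` of the exponential series of `l` is, block by block, the tail of the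
exponential series of `Ω`, the series defining `𝒩 - A`, and zero. Adding back `1 + l` gives the
claim.
-/

open Matrix NormedSpace
open scoped Nat

section BlockSums

variable {X m n o p R : Type*} [AddCommMonoid R] [TopologicalSpace R]

theorem HasSum.matrix_toBlocks₁₂ {f : X → Matrix (m ⊕ n) (o ⊕ p) R}
    {a : Matrix (m ⊕ n) (o ⊕ p) R} (hf : HasSum f a) :
    HasSum (fun x => (f x).toBlocks₁₂) a.toBlocks₁₂ :=
  hf.map (G := Matrix (m ⊕ n) (o ⊕ p) R →+ Matrix m p R)
    { toFun := toBlocks₁₂, map_zero' := rfl, map_add' := fun _ _ => rfl }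
    (continuous_id.matrix_submatrix _ _)

theorem HasSum.matrix_fromBlocks {f₁₁ : X → Matrix m o R} {f₁₂ : X → Matrix m p R}
    {f₂₁ : X → Matrix n o R} {f₂₂ : X → Matrix n p R} {a₁₁ : Matrix m o R} {a₁₂ : Matrix m p R}
    {a₂₁ : Matrix n o R} {a₂₂ : Matrix n p R} (h₁₁ : HasSum f₁₁ a₁₁) (h₁₂ : HasSum f₁₂ a₁₂)
    (h₂₁ : HasSum f₂₁ a₂₁) (h₂₂ : HasSum f₂₂ a₂₂) :
    HasSum (fun x => fromBlocks (f₁₁ x) (f₁₂ x) (f₂₁ x) (f₂₂ x)) (fromBlocks a₁₁ a₁₂ a₂₁ a₂₂) :=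
  (h₁₁.prodMk (h₁₂.prodMk (h₂₁.prodMk h₂₂))).map
    (G := Matrix m o R × Matrix m p R × Matrix n o R × Matrix n p R →+ Matrix (m ⊕ n) (o ⊕ p) R)
    { toFun := fun b => fromBlocks b.1 b.2.1 b.2.2.1 b.2.2.2
      map_zero' := fromBlocks_zero
      map_add' := fun _ _ => (fromBlocks_add ..).symm }
    (continuous_fst.matrix_fromBlocks continuous_snd.fst continuous_snd.snd.fst
      continuous_snd.snd.snd)

end BlockSums

namespace Matrix

variable {m n : Type*} [Fintype m] [DecidableEq m]

theorem hasSum_exp_sub_one_sub {𝕂 : Type*} [RCLike 𝕂] (M : Matrix m m 𝕂) :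
    HasSum (fun k => ((k + 2)! : 𝕂)⁻¹ • M ^ (k + 2)) (exp M - 1 - M) := by
  -- `exp` needs no norm; the L∞ operator norm only serves to make the series converge.
  have hexp : HasSum (fun k => (k ! : 𝕂)⁻¹ • M ^ k) (exp M) := by
    open scoped Matrix.Norms.Operator in exact exp_series_hasSum_exp' M
  simpa [Finset.sum_range_succ, sub_sub] using (hasSum_nat_add_iff' 2).2 hexp

theorem fromBlocks_zero₂₁_pow_add_two [Fintype n] [DecidableEq n] {R : Type*} [Semiring R]
    (Ω : Matrix m m R) (A : Matrix m n R) {B : Matrix n n R} (hB : B ^ 2 = 0) (k : ℕ) :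
    fromBlocks Ω A 0 B ^ (k + 2) =
      fromBlocks (Ω ^ (k + 2)) (Ω ^ (k + 1) * A + Ω ^ k * A * B) 0 0 := by
  rw [sq] at hB
  induction k with
  | zero => simp [sq, fromBlocks_multiply, hB]
  | succ k ih =>
    rw [pow_succ, ih, fromBlocks_multiply]
    simp [Matrix.add_mul, Matrix.mul_assoc, hB, pow_succ]

end Matrix

/-- The series in `𝒩` is indexed from `n = 0`; its `n`-th term is the paper's term `n + 2`. -/
theorem stmt5 (Ω : Matrix (Fin 3) (Fin 3) ℝ) (A : Matrix (Fin 3) (Fin 2) ℝ)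
    (B : Matrix (Fin 2) (Fin 2) ℝ) (hB : B ^ 2 = 0)
    (l : Matrix (Fin 3 ⊕ Fin 2) (Fin 3 ⊕ Fin 2) ℝ) (hl : l = Matrix.fromBlocks Ω A 0 B)
    (𝒩 : Matrix (Fin 3) (Fin 2) ℝ)
    (h𝒩 : 𝒩 = A + ∑' n : ℕ,
      (Nat.factorial (n + 2) : ℝ)⁻¹ • (Ω ^ (n + 1) * A + Ω ^ n * A * B)) :
    NormedSpace.exp l = Matrix.fromBlocks (NormedSpace.exp Ω) 𝒩 0 (1 + B) := by
  subst hl h𝒩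
  set c : ℕ → Matrix (Fin 3) (Fin 2) ℝ :=
    fun k => ((k + 2)! : ℝ)⁻¹ • (Ω ^ (k + 1) * A + Ω ^ k * A * B)
  have htail : HasSum (fun k => fromBlocks (((k + 2)! : ℝ)⁻¹ • Ω ^ (k + 2)) (c k) 0 0)
      (exp (fromBlocks Ω A 0 B) - 1 - fromBlocks Ω A 0 B) := by
    simpa only [fromBlocks_zero₂₁_pow_add_two Ω A hB, fromBlocks_smul, smul_zero] using
      hasSum_exp_sub_one_sub (fromBlocks Ω A 0 B)
  have hc : HasSum c (∑' k, c k) := htail.matrix_toBlocks₁₂.summable.hasSum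
  have h := htail.unique
    ((hasSum_exp_sub_one_sub Ω).matrix_fromBlocks hc hasSum_zero hasSum_zero)
  rw [sub_sub, sub_eq_iff_eq_add] at h
  rw [h, ← fromBlocks_one, fromBlocks_add, fromBlocks_add]
  congr 1 <;> abel
end
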